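/- arXiv:1912.10398 — 3 statements merged into one kernel-verified Lean document; each statement's English description precedes it below -/
import Mathlib

section
/- Let X be a real-valued random variable whose cumulative distribution function F is continuous and strictly increasing, and suppose X has a density f. Fix β ∈ (0,1) and ε > 0, and suppose f(x) ≥ l > 0 for all x ∈ [V_β − ε, V_β + ε]. Then for every n ≥ 1, P( |V̂_{n,β} − V_β| ≥ ε ) ≤ 2 exp(−2 n l² ε²). -/
open MeasureTheory ProbabilityTheory Set Real

/-- The cumulative distribution function of a measure on `ℝ`. -/
noncomputable def cdfFn (ν : MeasureTheory.Measure ℝ) (x : ℝ) : ℝ := (ν (Set.Iic x)).toReal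

/-- Value-at-risk at level `β`: `V_β = inf {c : F c ≥ β}`. -/
noncomputable def VaR (ν : MeasureTheory.Measure ℝ) (β : ℝ) : ℝ := sInf {c : ℝ | β ≤ cdfFn ν c}

/-- The empirical distribution function built from the first `n` samples. -/
noncomputable def edf {Ω : Type*} (Xs : ℕ → Ω → ℝ) (n : ℕ) (ω : Ω) (x : ℝ) : ℝ :=
  ((Finset.range n).filter (fun i => Xs i ω ≤ x)).card / n

/-- The empirical value-at-risk at level `β` built from the first `n` samples
(with the convention that at level `0` it is the minimum of the samples). -/
noncomputable def empVaR {Ω : Type*} (Xs : ℕ → Ω → ℝ) (n : ℕ) (ω : Ω) (β : ℝ) : ℝ :=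
  if β ≤ 0 then sInf ((fun i => Xs i ω) '' {i : ℕ | i < n})
  else sInf {x : ℝ | β ≤ edf Xs n ω x}

/-!
Around `V = V_β` the density is at least `l`, so `F (V + ε) ≥ β + l ε` and `F (V - ε) ≤ β - l ε`.
The empirical value-at-risk is `≥ V + ε` only if fewer than `β n` samples lie below `V + ε`, and
`≤ V - ε` only if at least `β n` samples are `≤ V - ε`. Either way a sum of `n` independent
indicators deviates from its mean by at least `n l ε`, which Hoeffding's inequality bounds by
`exp (-2 n l² ε²)`.
-/

open Filter Topology

section EmpiricalQuantile

variable {Ω : Type*} (Xs : ℕ → Ω → ℝ) (n : ℕ) (ω : Ω)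

noncomputable def sampleCount (s : Set ℝ) : ℝ :=
  ∑ i ∈ Finset.range n, s.indicator 1 (Xs i ω)

lemma edf_eq_sampleCount_div (x : ℝ) : edf Xs n ω x = sampleCount Xs n ω (Iic x) / n := by
  rw [edf, sampleCount, Finset.natCast_card_filter]
  rfl

lemma edf_mono : Monotone (edf Xs n ω) := by
  intro x y hxy
  unfold edf
  gcongr

lemma eventually_le_iff_le_nhdsGT (y c : ℝ) : ∀ᶠ x in 𝓝[>] c, (y ≤ x ↔ y ≤ c) := by
  rcases le_or_gt y c with h | h
  · filter_upwards [self_mem_nhdsWithin] with x hx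
    exact iff_of_true (h.trans (le_of_lt hx)) h
  · filter_upwards [nhdsWithin_le_nhds (Iio_mem_nhds h)] with x hx
    exact iff_of_false (not_le.2 hx) (not_le.2 h)

lemma eventually_le_iff_lt_nhdsLT (y c : ℝ) : ∀ᶠ x in 𝓝[<] c, (y ≤ x ↔ y < c) := by
  rcases lt_or_ge y c with h | h
  · filter_upwards [nhdsWithin_le_nhds (Ioi_mem_nhds h)] with x hx
    exact iff_of_true (le_of_lt hx) h
  · filter_upwards [self_mem_nhdsWithin] with x hx
    exact iff_of_false (not_le.2 (lt_of_lt_of_le hx h)) (not_lt.2 h)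

lemma eventually_sampleCount_Iic_nhdsGT (c : ℝ) :
    ∀ᶠ x in 𝓝[>] c, sampleCount Xs n ω (Iic x) = sampleCount Xs n ω (Iic c) := by
  filter_upwards [(eventually_all_finset (Finset.range n)).2
    fun i _ => eventually_le_iff_le_nhdsGT (Xs i ω) c] with x hx
  exact Finset.sum_congr rfl fun i hi => by simp [Set.indicator_apply, hx i hi]

lemma eventually_sampleCount_Iic_nhdsLT (c : ℝ) :
    ∀ᶠ x in 𝓝[<] c, sampleCount Xs n ω (Iic x) = sampleCount Xs n ω (Iio c) := by
  filter_upwards [(eventually_all_finset (Finset.range n)).2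
    fun i _ => eventually_le_iff_lt_nhdsLT (Xs i ω) c] with x hx
  exact Finset.sum_congr rfl fun i hi => by simp [Set.indicator_apply, hx i hi]

variable {Xs n ω} {β : ℝ}

lemma le_edf_of_empVaR_le (hβ0 : 0 < β) (hβ1 : β ≤ 1) (hn : 0 < n) {c : ℝ}
    (h : empVaR Xs n ω β ≤ c) : β ≤ edf Xs n ω c := by
  rw [empVaR, if_neg hβ0.not_ge] at h
  have hne : {x | β ≤ edf Xs n ω x}.Nonempty := by
    obtain ⟨x, hx⟩ := ((eventually_all_finset (Finset.range n)).2
      fun i _ => eventually_ge_atTop (Xs i ω)).exists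
    refine ⟨x, ?_⟩
    rw [mem_ofPred_eq, edf, Finset.filter_true_of_mem hx, Finset.card_range,
      div_self (Nat.cast_ne_zero.2 hn.ne')]
    exact hβ1
  obtain ⟨x, hx, hcx⟩ := ((eventually_sampleCount_Iic_nhdsGT Xs n ω c).and
    self_mem_nhdsWithin).exists
  obtain ⟨y, hy, hyx⟩ := exists_lt_of_csInf_lt hne (h.trans_lt hcx)
  calc β ≤ edf Xs n ω y := hy
    _ ≤ edf Xs n ω x := edf_mono Xs n ω hyx.le
    _ = edf Xs n ω c := by rw [edf_eq_sampleCount_div, edf_eq_sampleCount_div, hx]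

lemma edf_lt_of_lt_empVaR (hβ0 : 0 < β) {x : ℝ} (h : x < empVaR Xs n ω β) :
    edf Xs n ω x < β := by
  rw [empVaR, if_neg hβ0.not_ge] at h
  obtain ⟨m, hm⟩ := ((eventually_all_finset (Finset.range n)).2
    fun i _ => eventually_lt_atBot (Xs i ω)).exists
  have hbdd : BddBelow {x | β ≤ edf Xs n ω x} := by
    refine ⟨m, fun y hy => le_of_not_gt fun hym => ?_⟩
    have hzero : edf Xs n ω y = 0 := by
      rw [edf, Finset.filter_false_of_mem fun i hi => not_le.2 (hym.trans (hm i hi))]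
      simp
    exact hβ0.not_ge (hzero ▸ hy)
  exact lt_of_not_ge fun hx => h.not_ge (csInf_le hbdd hx)

lemma sampleCount_Iio_lt_of_le_empVaR (hβ0 : 0 < β) (hn : 0 < n) {c : ℝ}
    (h : c ≤ empVaR Xs n ω β) : sampleCount Xs n ω (Iio c) < β * n := by
  obtain ⟨x, hx, hxc⟩ := ((eventually_sampleCount_Iic_nhdsLT Xs n ω c).and
    self_mem_nhdsWithin).exists
  have := edf_lt_of_lt_empVaR hβ0 (lt_of_lt_of_le hxc h)
  rwa [edf_eq_sampleCount_div, hx, div_lt_iff₀ (by positivity)] at this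

lemma le_sampleCount_Iic_of_empVaR_le (hβ0 : 0 < β) (hβ1 : β ≤ 1) (hn : 0 < n) {c : ℝ}
    (h : empVaR Xs n ω β ≤ c) : β * n ≤ sampleCount Xs n ω (Iic c) := by
  have := le_edf_of_empVaR_le hβ0 hβ1 hn h
  rwa [edf_eq_sampleCount_div, le_div_iff₀ (by positivity)] at this

lemma setOf_le_abs_empVaR_sub_subset (hβ : β ∈ Ioo 0 1) (hn : 0 < n) (v ε : ℝ) :
    {ω | ε ≤ |empVaR Xs n ω β - v|} ⊆
      {ω | sampleCount Xs n ω (Iio (v + ε)) < β * n} ∪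
        {ω | β * n ≤ sampleCount Xs n ω (Iic (v - ε))} := by
  intro ω hω
  rcases le_abs'.1 (mem_ofPred_eq ▸ hω : ε ≤ _) with h | h
  · exact Or.inr (le_sampleCount_Iic_of_empVaR_le hβ.1 hβ.2.le hn (by linarith))
  · exact Or.inl (sampleCount_Iio_lt_of_le_empVaR hβ.1 hn (by linarith))

end EmpiricalQuantile

section Hoeffding

variable {Ω : Type*} [MeasurableSpace Ω] {μ : Measure Ω} {X : Ω → ℝ} {Xs : ℕ → Ω → ℝ}
  {s : Set ℝ}

lemma integral_indicator_comp_of_identDistrib {Y : Ω → ℝ} (hident : IdentDistrib Y X μ μ)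
    (hs : MeasurableSet s) : ∫ ω, s.indicator 1 (Y ω) ∂μ = (μ.map X).real s := by
  rw [← integral_indicator_one hs, ← hident.map_eq,
    integral_map hident.aemeasurable_fst (measurable_one.indicator hs).aestronglyMeasurable]

lemma measureReal_mul_le_sum_le_of_iIndepFun {Z : ℕ → Ω → ℝ} (hindep : iIndepFun Z μ)
    (hZ : ∀ i, HasSubgaussianMGF (Z i) (1 / 4) μ) {a : ℝ} (ha : 0 ≤ a) (n : ℕ) :
    μ.real {ω | n * a ≤ ∑ i ∈ Finset.range n, Z i ω} ≤ exp (-2 * n * a ^ 2) := by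
  refine (HasSubgaussianMGF.measure_sum_range_ge_le_of_iIndepFun hindep
    (fun i _ => hZ i) (by positivity)).trans_eq ?_
  rcases eq_or_ne (n : ℝ) 0 with hn | hn
  · simp [hn]
  · congr 1
    push_cast
    field_simp
    ring

variable [IsProbabilityMeasure μ]

lemma hasSubgaussianMGF_indicator_sub {Y : Ω → ℝ} (hident : IdentDistrib Y X μ μ)
    (hs : MeasurableSet s) :
    HasSubgaussianMGF (fun ω => s.indicator 1 (Y ω) - (μ.map X).real s) (1 / 4) μ := by
  have h := hasSubgaussianMGF_of_mem_Icc (X := fun ω => s.indicator 1 (Y ω)) (a := 0) (b := 1)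
    ((measurable_one.indicator hs).comp_aemeasurable hident.aemeasurable_fst)
    (ae_of_all μ fun ω => by by_cases h : Y ω ∈ s <;> simp [h])
  rw [integral_indicator_comp_of_identDistrib hident hs] at h
  convert h using 1
  norm_num

variable (hindep : iIndepFun Xs μ) (hident : ∀ i, IdentDistrib (Xs i) X μ μ)
  (hs : MeasurableSet s) {a : ℝ} (ha : 0 ≤ a) (n : ℕ)
include hindep hident hs ha

lemma measureReal_le_sampleCount_le {t : ℝ} (ht : (μ.map X).real s + a ≤ t) :
    μ.real {ω | t * n ≤ sampleCount Xs n ω s} ≤ exp (-2 * n * a ^ 2) := by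
  refine le_trans (measureReal_mono ?_ (measure_ne_top _ _)) (measureReal_mul_le_sum_le_of_iIndepFun
    (hindep.comp (fun _ y => s.indicator 1 y - (μ.map X).real s)
      fun _ => (measurable_one.indicator hs).sub_const _)
    (fun i => hasSubgaussianMGF_indicator_sub (hident i) hs) ha n)
  intro ω hω
  simp only [sampleCount, mem_ofPred_eq, Function.comp_apply, Finset.sum_sub_distrib,
    Finset.sum_const, Finset.card_range, nsmul_eq_mul] at hω ⊢
  nlinarith

lemma measureReal_sampleCount_lt_le {t : ℝ} (ht : t + a ≤ (μ.map X).real s) :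
    μ.real {ω | sampleCount Xs n ω s < t * n} ≤ exp (-2 * n * a ^ 2) := by
  refine le_trans (measureReal_mono ?_ (measure_ne_top _ _)) (measureReal_mul_le_sum_le_of_iIndepFun
    (hindep.comp (fun _ y => (μ.map X).real s - s.indicator 1 y)
      fun _ => (measurable_one.indicator hs).const_sub _)
    (fun i => (hasSubgaussianMGF_indicator_sub (hident i) hs).neg.congr
      (ae_of_all _ fun ω => by simp)) ha n)
  intro ω hω
  simp only [sampleCount, mem_ofPred_eq, Function.comp_apply, Finset.sum_sub_distrib,
    Finset.sum_const, Finset.card_range, nsmul_eq_mul] at hω ⊢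
  nlinarith

end Hoeffding

section ValueAtRisk

variable {ν : Measure ℝ}

lemma cdfFn_VaR [IsProbabilityMeasure ν] (hFcont : Continuous (cdfFn ν))
    (hFmono : StrictMono (cdfFn ν)) {β : ℝ} (hβ : β ∈ Ioo 0 1) : cdfFn ν (VaR ν β) = β := by
  have hcdf : cdfFn ν = cdf ν := funext fun x => by rw [cdf_eq_real, cdfFn, measureReal_def]
  obtain ⟨a, ha⟩ := ((hcdf ▸ tendsto_cdf_atBot (μ := ν)).eventually_lt_const hβ.1).exists
  obtain ⟨b, hb⟩ := ((hcdf ▸ tendsto_cdf_atTop (μ := ν)).eventually_const_lt hβ.2).exists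
  obtain ⟨c, -, hc⟩ := intermediate_value_Icc (hFmono.lt_iff_lt.1 (ha.trans hb)).le
    hFcont.continuousOn ⟨ha.le, hb.le⟩
  have hset : {x | β ≤ cdfFn ν x} = Ici c := by
    ext x
    rw [mem_ofPred_eq, ← hc, mem_Ici, hFmono.le_iff_le]
  rw [VaR, hset, csInf_Ici, hc]

variable [IsFiniteMeasure ν] {f : ℝ → ℝ}
  (hdens : ν = volume.withDensity (fun x => ENNReal.ofReal (f x)))
  {l : ℝ} (hl : 0 ≤ l)
include hdens hl

lemma mul_volumeReal_le_measureReal {s : Set ℝ} (hs : MeasurableSet s) (hsfin : volume s ≠ ⊤)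
    (hfl : ∀ x ∈ s, l ≤ f x) : l * volume.real s ≤ ν.real s := by
  rw [measureReal_def ν, ← ENNReal.ofReal_le_iff_le_toReal (measure_ne_top ν s),
    ENNReal.ofReal_mul hl, ofReal_measureReal hsfin, hdens, withDensity_apply _ hs,
    ← setLIntegral_const]
  exact setLIntegral_mono' hs fun x hx => ENNReal.ofReal_le_ofReal (hfl x hx)

lemma cdfFn_add_mul_le_measureReal_Iio {a b : ℝ} (hab : a < b) (hfl : ∀ x ∈ Ioo a b, l ≤ f x) :
    cdfFn ν a + l * (b - a) ≤ ν.real (Iio b) := by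
  have h := mul_volumeReal_le_measureReal hdens hl measurableSet_Ioo measure_Ioo_lt_top.ne hfl
  rw [Real.volume_real_Ioo_of_le hab.le] at h
  rw [← Iic_union_Ioo_eq_Iio hab, cdfFn, ← measureReal_def, measureReal_union
    ((Iic_disjoint_Ioi le_rfl).mono_right Ioo_subset_Ioi_self) measurableSet_Ioo]
  linarith

lemma measureReal_Iic_add_mul_le_cdfFn {a b : ℝ} (hab : a ≤ b) (hfl : ∀ x ∈ Ioc a b, l ≤ f x) :
    ν.real (Iic a) + l * (b - a) ≤ cdfFn ν b := by
  have h := mul_volumeReal_le_measureReal hdens hl measurableSet_Ioc measure_Ioc_lt_top.ne hfl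
  rw [Real.volume_real_Ioc_of_le hab] at h
  rw [cdfFn, ← measureReal_def, ← Iic_union_Ioc_eq_Iic hab,
    measureReal_union (Iic_disjoint_Ioc le_rfl) measurableSet_Ioc]
  linarith

end ValueAtRisk

theorem stmt_2_general
    {Ω : Type*} [MeasurableSpace Ω] (μ : MeasureTheory.Measure Ω) [IsProbabilityMeasure μ]
    (X : Ω → ℝ) (hX : Measurable X)
    (Xs : ℕ → Ω → ℝ)
    (hindep : ProbabilityTheory.iIndepFun Xs μ)
    (hident : ∀ i, ProbabilityTheory.IdentDistrib (Xs i) X μ μ)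
    (f : ℝ → ℝ)
    (hdens : μ.map X = MeasureTheory.volume.withDensity (fun x => ENNReal.ofReal (f x)))
    (hFcont : Continuous (cdfFn (μ.map X)))
    (hFmono : StrictMono (cdfFn (μ.map X)))
    (β : ℝ) (hβ : β ∈ Set.Ioo (0 : ℝ) 1)
    (ε l : ℝ) (hε : 0 < ε) (hl : 0 < l)
    (hfl : ∀ x ∈ Set.Icc (VaR (μ.map X) β - ε) (VaR (μ.map X) β + ε), l ≤ f x)
    (n : ℕ) (hn : 1 ≤ n) :
    (μ {ω | ε ≤ |empVaR Xs n ω β - VaR (μ.map X) β|}).toReal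
      ≤ 2 * Real.exp (-2 * n * l ^ 2 * ε ^ 2) := by
  have := Measure.isProbabilityMeasure_map (μ := μ) hX.aemeasurable
  set V := VaR (μ.map X) β
  have hFV := cdfFn_VaR hFcont hFmono hβ
  have hup : β + l * ε ≤ (μ.map X).real (Iio (V + ε)) := by
    have := cdfFn_add_mul_le_measureReal_Iio hdens hl.le (lt_add_of_pos_right V hε)
      fun x hx => hfl x ⟨by linarith [hx.1], hx.2.le⟩
    rwa [hFV, add_sub_cancel_left] at this
  have hdown : (μ.map X).real (Iic (V - ε)) + l * ε ≤ β := by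
    have := measureReal_Iic_add_mul_le_cdfFn hdens hl.le (sub_le_self V hε.le)
      fun x hx => hfl x ⟨hx.1.le, by linarith [hx.2]⟩
    rwa [hFV, sub_sub_cancel] at this
  have hε' : 0 ≤ l * ε := (mul_pos hl hε).le
  calc μ.real {ω | ε ≤ |empVaR Xs n ω β - V|}
      ≤ μ.real {ω | sampleCount Xs n ω (Iio (V + ε)) < β * n}
        + μ.real {ω | β * n ≤ sampleCount Xs n ω (Iic (V - ε))} :=
      (measureReal_mono (setOf_le_abs_empVaR_sub_subset hβ hn V ε)).trans
        (measureReal_union_le _ _)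
    _ ≤ exp (-2 * n * (l * ε) ^ 2) + exp (-2 * n * (l * ε) ^ 2) :=
      add_le_add (measureReal_sampleCount_lt_le hindep hident measurableSet_Iio hε' n hup)
        (measureReal_le_sampleCount_le hindep hident measurableSet_Iic hε' n hdown)
    _ = 2 * exp (-2 * n * l ^ 2 * ε ^ 2) := by ring_nf

/-- VaR concentration (Lemma 2): if the CDF is continuous and strictly increasing, the law has a
density bounded below by `l > 0` on `[V_β − ε, V_β + ε]`, then
`P(|V̂_{n,β} − V_β| ≥ ε) ≤ 2 exp(−2 n l² ε²)`. -/
theorem stmt_2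
    {Ω : Type*} [MeasurableSpace Ω] (μ : MeasureTheory.Measure Ω) [IsProbabilityMeasure μ]
    (X : Ω → ℝ) (hX : Measurable X)
    (Xs : ℕ → Ω → ℝ) (hXs : ∀ i, Measurable (Xs i))
    (hindep : ProbabilityTheory.iIndepFun Xs μ)
    (hident : ∀ i, ProbabilityTheory.IdentDistrib (Xs i) X μ μ)
    (f : ℝ → ℝ) (hf : Measurable f)
    (hdens : μ.map X = MeasureTheory.volume.withDensity (fun x => ENNReal.ofReal (f x)))
    (hFcont : Continuous (cdfFn (μ.map X)))
    (hFmono : StrictMono (cdfFn (μ.map X)))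
    (β : ℝ) (hβ : β ∈ Set.Ioo (0 : ℝ) 1)
    (ε l : ℝ) (hε : 0 < ε) (hl : 0 < l)
    (hfl : ∀ x ∈ Set.Icc (VaR (μ.map X) β - ε) (VaR (μ.map X) β + ε), l ≤ f x)
    (n : ℕ) (hn : 1 ≤ n) :
    (μ {ω | ε ≤ |empVaR Xs n ω β - VaR (μ.map X) β|}).toReal
      ≤ 2 * Real.exp (-2 * n * l ^ 2 * ε ^ 2) :=
  stmt_2_general μ X hX Xs hindep hident f hdens hFcont hFmono β hβ ε l hε hl hfl n hn
end

section
/- Let x₀ ∈ ℝ, let K > 0, and let f : [x₀, ∞) → (0, ∞) be continuously differentiable with |f'(x)| ≤ K·f(x)³ for all x ≥ x₀. Then f(x) ≥ f(x₀)/√(1 + 2K f(x₀)² (x − x₀)) for all x ≥ x₀, and consequently ∫_{x₀}^∞ f(x) dx = ∞. In particular, no probability density on ℝ that is positive and continuously differentiable on a half-line [x₀,∞) can satisfy a uniform bound |f'(x)|/f(x)³ ≤ K on that half-line. -/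
open MeasureTheory Set Real

/-!
The bound `|f'| ≤ K f³` says exactly that `(f⁻²)' = -2 f' / f³ ≤ 2K`, so `f⁻²` grows at most
linearly. Hence `f` decays no faster than `x^(-1/2)`, which is not integrable at infinity.
-/

section InvSq

variable {s : Set ℝ} {f f' : ℝ → ℝ} {K : ℝ}

theorem antitoneOn_inv_sq_sub_of_abs_hasDerivWithinAt_le (hs : Convex ℝ s)
    (hpos : ∀ x ∈ s, 0 < f x) (hder : ∀ x ∈ s, HasDerivWithinAt f (f' x) s x)
    (hbound : ∀ x ∈ s, |f' x| ≤ K * f x ^ 3) :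
    AntitoneOn (fun x => (f x ^ 2)⁻¹ - 2 * K * x) s := by
  have hcont : ContinuousOn f s := fun x hx => (hder x hx).continuousWithinAt
  refine antitoneOn_of_hasDerivWithinAt_nonpos hs (f' := fun x => -2 * f' x / f x ^ 3 - 2 * K)
    (((hcont.pow 2).inv₀ fun x hx => (pow_pos (hpos x hx) 2).ne').sub (by fun_prop))
    (fun x hx => ?_) (fun x hx => ?_)
  · have hfx : f x ≠ 0 := (hpos x (interior_subset hx)).ne'
    have hf : HasDerivAt f (f' x) x :=
      (hder x (interior_subset hx)).hasDerivAt (mem_interior_iff_mem_nhds.1 hx)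
    refine HasDerivAt.hasDerivWithinAt ((((hf.fun_pow 2).fun_inv (pow_ne_zero 2 hfx)).fun_sub
      ((hasDerivAt_id' x).const_mul (2 * K))).congr_deriv ?_)
    field_simp
    push_cast
    ring
  · have hxs := interior_subset hx
    have : -2 * f' x / f x ^ 3 ≤ 2 * K := by
      rw [div_le_iff₀ (pow_pos (hpos x hxs) 3)]
      linarith [neg_abs_le (f' x), hbound x hxs]
    linarith

theorem inv_sq_le_inv_sq_add_of_abs_hasDerivWithinAt_le (hs : Convex ℝ s)
    (hpos : ∀ x ∈ s, 0 < f x) (hder : ∀ x ∈ s, HasDerivWithinAt f (f' x) s x)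
    (hbound : ∀ x ∈ s, |f' x| ≤ K * f x ^ 3) {x₀ x : ℝ} (hx₀ : x₀ ∈ s) (hx : x ∈ s)
    (hle : x₀ ≤ x) :
    (f x ^ 2)⁻¹ ≤ (f x₀ ^ 2)⁻¹ + 2 * K * (x - x₀) := by
  have := antitoneOn_inv_sq_sub_of_abs_hasDerivWithinAt_le hs hpos hder hbound hx₀ hx hle
  simp only at this
  linarith

end InvSq

theorem div_sqrt_one_add_le_of_inv_sq_le {a b t : ℝ} (ha : 0 < a) (hb : 0 < b)
    (h : (b ^ 2)⁻¹ ≤ (a ^ 2)⁻¹ + t) : a / √(1 + a ^ 2 * t) ≤ b := by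
  have hsq : a ^ 2 ≤ b ^ 2 * (1 + a ^ 2 * t) := by
    have := mul_le_mul_of_nonneg_left h (mul_nonneg (sq_nonneg a) (sq_nonneg b))
    field_simp at this
    linarith
  have hD : 0 < 1 + a ^ 2 * t := pos_of_mul_pos_right ((pow_pos ha 2).trans_le hsq) (sq_nonneg b)
  rw [div_le_iff₀ (sqrt_pos.2 hD)]
  calc a = √(a ^ 2) := (sqrt_sq ha.le).symm
    _ ≤ √(b ^ 2 * (1 + a ^ 2 * t)) := sqrt_le_sqrt hsq
    _ = b * √(1 + a ^ 2 * t) := by rw [sqrt_mul (sq_nonneg b), sqrt_sq hb.le]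

section NotIntegrable

variable {f : ℝ → ℝ} {t : ℝ}

theorem not_integrableOn_Ioi_of_inv_sq_le_mul {C : ℝ} (ht : 0 < t)
    (hpos : ∀ x ∈ Ioi t, 0 < f x) (hle : ∀ x ∈ Ioi t, (f x ^ 2)⁻¹ ≤ C * x) :
    ¬ IntegrableOn f (Ioi t) := by
  intro hf
  have hC : 0 < C := by
    have := (inv_pos.2 (pow_pos (hpos (t + 1) (by simp)) 2)).trans_le (hle (t + 1) (by simp))
    exact pos_of_mul_pos_left this (by linarith)
  have hlower : ∀ x ∈ Ioi t, x ^ (-(1 / 2) : ℝ) ≤ C ^ (1 / 2 : ℝ) * f x := by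
    intro x hx
    have hx0 : 0 < x := ht.trans hx
    have hfx := hpos x hx
    calc x ^ (-(1 / 2) : ℝ) = C ^ (1 / 2 : ℝ) * (C * x) ^ (-(1 / 2) : ℝ) := by
          rw [mul_rpow hC.le hx0.le, ← mul_assoc, ← rpow_add hC]; norm_num
      _ ≤ C ^ (1 / 2 : ℝ) * ((f x ^ 2)⁻¹) ^ (-(1 / 2) : ℝ) := by
          gcongr C ^ _ * ?_
          exact rpow_le_rpow_of_nonpos (by positivity) (hle x hx) (by norm_num)
      _ = C ^ (1 / 2 : ℝ) * f x := by
          rw [inv_rpow (by positivity), rpow_neg (by positivity), inv_inv, ← rpow_natCast,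
            ← rpow_mul hfx.le]
          norm_num
  have hrpow : IntegrableOn (fun x : ℝ => x ^ (-(1 / 2) : ℝ)) (Ioi t) := by
    refine (hf.const_mul (C ^ (1 / 2 : ℝ))).mono' (by fun_prop)
      ((ae_restrict_iff' measurableSet_Ioi).2 (.of_forall fun x hx => ?_))
    rw [norm_of_nonneg (by have := ht.trans hx; positivity)]
    exact hlower x hx
  have := (integrableOn_Ioi_rpow_iff ht).1 hrpow
  norm_num at this

theorem not_integrableOn_Ioi_of_inv_sq_le_affine {A B : ℝ} (hpos : ∀ x ∈ Ioi t, 0 < f x)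
    (hle : ∀ x ∈ Ioi t, (f x ^ 2)⁻¹ ≤ A + B * x) :
    ¬ IntegrableOn f (Ioi t) := by
  have hsub : Ioi (max t 1) ⊆ Ioi t := Ioi_subset_Ioi (le_max_left t 1)
  refine fun hf => not_integrableOn_Ioi_of_inv_sq_le_mul (C := |A| + |B|)
    (lt_max_of_lt_right one_pos) (fun x hx => hpos x (hsub hx)) (fun x hx => ?_) (hf.mono_set hsub)
  have hx1 : 1 ≤ x := (le_max_right t 1).trans (le_of_lt hx)
  calc (f x ^ 2)⁻¹ ≤ A + B * x := hle x (hsub hx)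
    _ ≤ |A| * x + |B| * x := by
        nlinarith [le_abs_self A, le_abs_self B, neg_abs_le B, abs_nonneg A]
    _ = (|A| + |B|) * x := by ring

end NotIntegrable

theorem stmt_12_general
    (x₀ K : ℝ) (f f' : ℝ → ℝ)
    (hfpos : ∀ x ∈ Set.Ici x₀, 0 < f x)
    (hfder : ∀ x ∈ Set.Ici x₀, HasDerivWithinAt f (f' x) (Set.Ici x₀) x)
    (hbound : ∀ x ∈ Set.Ici x₀, |f' x| ≤ K * f x ^ 3) :
    (∀ x ∈ Set.Ici x₀, f x₀ / Real.sqrt (1 + 2 * K * f x₀ ^ 2 * (x - x₀)) ≤ f x) ∧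
      (∫⁻ x in Set.Ici x₀, ENNReal.ofReal (f x) = ⊤) ∧
      ¬ (∫⁻ x, ENNReal.ofReal (f x) = 1) := by
  have hinv : ∀ x ∈ Ici x₀, (f x ^ 2)⁻¹ ≤ (f x₀ ^ 2)⁻¹ + 2 * K * (x - x₀) := fun x hx =>
    inv_sq_le_inv_sq_add_of_abs_hasDerivWithinAt_le (convex_Ici x₀) hfpos hfder hbound
      self_mem_Ici hx hx
  have hlower : ∀ x ∈ Ici x₀, f x₀ / √(1 + 2 * K * f x₀ ^ 2 * (x - x₀)) ≤ f x := fun x hx => by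
    simpa only [mul_assoc, mul_left_comm _ (f x₀ ^ 2)] using
      div_sqrt_one_add_le_of_inv_sq_le (hfpos x₀ self_mem_Ici) (hfpos x hx) (hinv x hx)
  have hnot : ¬ IntegrableOn f (Ici x₀) := fun hf =>
    not_integrableOn_Ioi_of_inv_sq_le_affine (A := (f x₀ ^ 2)⁻¹ - 2 * K * x₀) (B := 2 * K)
      (fun x hx => hfpos x (Ioi_subset_Ici_self hx)) (fun x hx => by linarith [hinv x (Ioi_subset_Ici_self hx)])
      (hf.mono_set Ioi_subset_Ici_self)
  have htop : ∫⁻ x in Ici x₀, ENNReal.ofReal (f x) = ⊤ := by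
    by_contra hne
    refine hnot ((lintegral_ofReal_ne_top_iff_integrable ?_ ?_).1 hne)
    · exact (ContinuousOn.aestronglyMeasurable (fun x hx => (hfder x hx).continuousWithinAt)
        measurableSet_Ici)
    · exact (ae_restrict_iff' measurableSet_Ici).2 (.of_forall fun x hx => (hfpos x hx).le)
  refine ⟨hlower, htop, fun h => ?_⟩
  have := setLIntegral_le_lintegral (μ := volume) (Ici x₀) fun x => ENNReal.ofReal (f x)
  simp [htop, h] at this

/-- If `f` is positive and continuously differentiable on `[x₀, ∞)` with `|f'| ≤ K f³`, then
`f(x) ≥ f(x₀)/√(1 + 2K f(x₀)² (x − x₀))`, hence `∫_{x₀}^∞ f = ∞`; in particular `f` cannot be a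
probability density (its integral over `ℝ` cannot equal `1`). -/
theorem stmt_12
    (x₀ K : ℝ) (hK : 0 < K) (f f' : ℝ → ℝ)
    (hfpos : ∀ x ∈ Set.Ici x₀, 0 < f x)
    (hfder : ∀ x ∈ Set.Ici x₀, HasDerivWithinAt f (f' x) (Set.Ici x₀) x)
    (hf'cont : ContinuousOn f' (Set.Ici x₀))
    (hbound : ∀ x ∈ Set.Ici x₀, |f' x| ≤ K * f x ^ 3) :
    (∀ x ∈ Set.Ici x₀, f x₀ / Real.sqrt (1 + 2 * K * f x₀ ^ 2 * (x - x₀)) ≤ f x) ∧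
      (∫⁻ x in Set.Ici x₀, ENNReal.ofReal (f x) = ⊤) ∧
      ¬ (∫⁻ x, ENNReal.ofReal (f x) = 1) :=
  stmt_12_general x₀ K f f' hfpos hfder hbound
end

section
/- Let X be Gaussian with mean zero and variance σ² > 0, with cumulative distribution function F, let n ≥ 1 be an integer, set B_n = √(2σ² log n) and η = F(B_n). Then ∫_η^1 V_β dβ ≤ 2√(2σ²/e)·√(1−η) ≤ 2√(2σ²/e)·exp(−B_n²/(4σ²)) = 2√(2σ²/e)/√n ≤ 2σ/√n. -/
/-! Chernoff's bound gives the Gaussian tail estimate `P(X > x) ≤ exp (-x² / (2σ²))` for `x ≥ 0`.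
Hence for `η < β < 1` the level `c = √(2σ² log (1-β)⁻¹)` already satisfies `F c ≥ β`, so
`V_β ≤ √(2σ² log (1-β)⁻¹) ≤ √(2σ²/e) (1-β)^(-1/2)` by `log y ≤ y / e`, and integrating
`(1-β)^(-1/2)` over `[η, 1]` gives `2 √(1-η)`. The tail estimate at `B_n` gives
`√(1-η) ≤ exp (-B_n² / (4σ²)) = 1/√n`, and `e ≥ 2` gives the last inequality. -/

open MeasureTheory ProbabilityTheory Set Real

open scoped NNReal

theorem Real.log_le_div_exp_one {y : ℝ} (hy : 0 < y) : log y ≤ y / exp 1 := by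
  have := log_le_sub_one_of_pos (div_pos hy (exp_pos 1))
  rw [log_div hy.ne' (exp_ne_zero 1), log_exp] at this
  linarith

theorem sqrt_mul_log_inv_le {a y : ℝ} (ha : 0 ≤ a) (hy : 0 < y) :
    √(a * log y⁻¹) ≤ √(a / exp 1) * y ^ (-(1 / 2) : ℝ) :=
  calc √(a * log y⁻¹) ≤ √(a / exp 1 * y⁻¹) := by
        refine sqrt_le_sqrt ?_
        rw [div_mul_eq_mul_div, mul_div_assoc]
        exact mul_le_mul_of_nonneg_left (log_le_div_exp_one (inv_pos.mpr hy)) ha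
    _ = √(a / exp 1) * y ^ (-(1 / 2) : ℝ) := by
        rw [sqrt_mul (by positivity), sqrt_inv, rpow_neg hy.le, ← sqrt_eq_rpow]

theorem intervalIntegrable_one_sub_rpow_neg_half (a : ℝ) :
    IntervalIntegrable (fun β : ℝ => (1 - β) ^ (-(1 / 2) : ℝ)) volume a 1 := by
  simpa using (intervalIntegral.intervalIntegrable_rpow' (a := 1 - a) (b := 0)
    (r := -(1 / 2)) (by norm_num)).comp_sub_left 1

theorem integral_one_sub_rpow_neg_half (a : ℝ) :
    ∫ β in a..1, (1 - β) ^ (-(1 / 2) : ℝ) = 2 * √(1 - a) := by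
  rw [intervalIntegral.integral_comp_sub_left (fun x : ℝ => x ^ (-(1 / 2) : ℝ)) 1, sub_self,
    integral_rpow (Or.inl (by norm_num)), zero_rpow (by norm_num), sqrt_eq_rpow]
  norm_num
  ring

theorem gaussianReal_real_Ioi_le (v : ℝ≥0) {x : ℝ} (hx : 0 ≤ x) :
    (gaussianReal 0 v).real (Ioi x) ≤ exp (-x ^ 2 / (2 * v)) := by
  rcases eq_or_ne v 0 with rfl | hv
  · simp
  have hv' : (v : ℝ) ≠ 0 := NNReal.coe_ne_zero.mpr hv
  calc (gaussianReal 0 v).real (Ioi x) ≤ (gaussianReal 0 v).real {y | x ≤ y} :=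
        measureReal_mono fun _ hy => le_of_lt (mem_Ioi.mp hy)
    _ ≤ exp (-(x / v) * x) * mgf id (gaussianReal 0 v) (x / v) :=
        measure_ge_le_exp_mul_mgf x (by positivity) (integrable_exp_mul_gaussianReal _)
    _ = exp (-x ^ 2 / (2 * v)) := by
        rw [mgf_id_gaussianReal, ← exp_add]
        congr 1
        field_simp
        ring

section VaR

variable {ν : Measure ℝ} {b c β : ℝ}

theorem cdfFn_nonneg (x : ℝ) : 0 ≤ cdfFn ν x := measureReal_nonneg

theorem cdfFn_le_one [IsProbabilityMeasure ν] (x : ℝ) : cdfFn ν x ≤ 1 := measureReal_le_one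

theorem cdfFn_mono [IsFiniteMeasure ν] : Monotone (cdfFn ν) := fun _ _ hab =>
  measureReal_mono (Iic_subset_Iic.2 hab)

theorem one_sub_cdfFn [IsProbabilityMeasure ν] (x : ℝ) : 1 - cdfFn ν x = ν.real (Ioi x) := by
  rw [← compl_Iic, probReal_compl_eq_one_sub measurableSet_Iic]
  rfl

theorem le_of_cdfFn_lt_of_le_cdfFn [IsFiniteMeasure ν] (hb : cdfFn ν b < β)
    (hc : β ≤ cdfFn ν c) : b ≤ c :=
  le_of_not_gt fun h => (cdfFn_mono h.le).not_gt (hb.trans_le hc)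

theorem bddBelow_setOf_le_cdfFn [IsFiniteMeasure ν] (hb : cdfFn ν b < β) :
    BddBelow {c | β ≤ cdfFn ν c} :=
  ⟨b, fun _ hc => le_of_cdfFn_lt_of_le_cdfFn hb hc⟩

theorem VaR_le [IsFiniteMeasure ν] (hb : cdfFn ν b < β) (hc : β ≤ cdfFn ν c) : VaR ν β ≤ c :=
  csInf_le (bddBelow_setOf_le_cdfFn hb) hc

theorem le_VaR [IsFiniteMeasure ν] (hb : cdfFn ν b < β) (hc : β ≤ cdfFn ν c) : b ≤ VaR ν β :=
  le_csInf ⟨c, hc⟩ fun _ hc' => le_of_cdfFn_lt_of_le_cdfFn hb hc'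

theorem VaR_mono [IsFiniteMeasure ν] {β' : ℝ} (hb : cdfFn ν b < β) (hββ' : β ≤ β')
    (hc : β' ≤ cdfFn ν c) : VaR ν β ≤ VaR ν β' :=
  csInf_le_csInf (bddBelow_setOf_le_cdfFn hb) ⟨c, hc⟩ fun _ hc' => hββ'.trans hc'

end VaR

section GaussianTail

variable {ν : Measure ℝ} [IsProbabilityMeasure ν] {v : ℝ}

theorem le_cdfFn_sqrt_log_inv (hv : 0 < v)
    (htail : ∀ x, 0 ≤ x → ν.real (Ioi x) ≤ exp (-x ^ 2 / (2 * v))) {β : ℝ} (hβ₀ : 0 ≤ β)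
    (hβ₁ : β < 1) : β ≤ cdfFn ν √(2 * v * log (1 - β)⁻¹) := by
  have hL : 0 ≤ 2 * v * log (1 - β)⁻¹ :=
    mul_nonneg (by positivity) (log_nonneg (one_le_inv₀ (by linarith) |>.mpr (by linarith)))
  have h := htail _ (sqrt_nonneg (2 * v * log (1 - β)⁻¹))
  rw [sq_sqrt hL, show -(2 * v * log (1 - β)⁻¹) / (2 * v) = log (1 - β) by
    rw [log_inv]; field_simp, exp_log (by linarith), ← one_sub_cdfFn] at h
  linarith

theorem VaR_le_of_tail_le (hv : 0 < v)
    (htail : ∀ x, 0 ≤ x → ν.real (Ioi x) ≤ exp (-x ^ 2 / (2 * v))) {b β : ℝ}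
    (hb : cdfFn ν b < β) (hβ : β < 1) :
    VaR ν β ≤ √(2 * v / exp 1) * (1 - β) ^ (-(1 / 2) : ℝ) :=
  (VaR_le hb (le_cdfFn_sqrt_log_inv hv htail ((cdfFn_nonneg b).trans hb.le) hβ)).trans
    (sqrt_mul_log_inv_le (by positivity) (by linarith))

theorem integral_VaR_le_of_tail_le (hv : 0 < v)
    (htail : ∀ x, 0 ≤ x → ν.real (Ioi x) ≤ exp (-x ^ 2 / (2 * v))) {b : ℝ} (hb : 0 ≤ b) :
    ∫ β in cdfFn ν b..1, VaR ν β ≤ 2 * √(2 * v / exp 1) * √(1 - cdfFn ν b) := by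
  set η := cdfFn ν b
  have hη : η ≤ 1 := cdfFn_le_one b
  set M : ℝ → ℝ := fun β => √(2 * v / exp 1) * (1 - β) ^ (-(1 / 2) : ℝ)
  have hM : IntervalIntegrable M volume η 1 :=
    (intervalIntegrable_one_sub_rpow_neg_half η).const_mul _
  have hVM : ∀ β ∈ Ioo η 1, VaR ν β ≤ M β := fun β hβ => VaR_le_of_tail_le hv htail hβ.1 hβ.2
  have hcdf : ∀ β ∈ Ioo η 1, β ≤ cdfFn ν √(2 * v * log (1 - β)⁻¹) := fun β hβ =>
    le_cdfFn_sqrt_log_inv hv htail ((cdfFn_nonneg b).trans hβ.1.le) hβ.2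
  -- `VaR ν` is monotone, hence measurable, on `(η, 1)`, and dominated there by `M`.
  have hV : IntervalIntegrable (VaR ν) volume η 1 := by
    have hmono : MonotoneOn (VaR ν) (Ioo η 1) := fun β hβ β' hβ' hββ' =>
      VaR_mono hβ.1 hββ' (hcdf β' hβ')
    refine (intervalIntegrable_iff_integrableOn_Ioo_of_le hη).mpr <|
      ((intervalIntegrable_iff_integrableOn_Ioo_of_le hη).mp hM).mono'
        (aemeasurable_restrict_of_monotoneOn measurableSet_Ioo hmono).aestronglyMeasurable
        (ae_restrict_of_forall_mem measurableSet_Ioo fun β hβ => ?_)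
    rw [norm_of_nonneg (hb.trans (le_VaR hβ.1 (hcdf β hβ)))]
    exact hVM β hβ
  calc ∫ β in η..1, VaR ν β ≤ ∫ β in η..1, M β :=
        intervalIntegral.integral_mono_on_of_le_Ioo hη hV hM hVM
    _ = 2 * √(2 * v / exp 1) * √(1 - η) := by
        rw [intervalIntegral.integral_const_mul, integral_one_sub_rpow_neg_half]
        ring

theorem sqrt_one_sub_cdfFn_le_of_tail_le
    (htail : ∀ x, 0 ≤ x → ν.real (Ioi x) ≤ exp (-x ^ 2 / (2 * v))) {b : ℝ} (hb : 0 ≤ b) :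
    √(1 - cdfFn ν b) ≤ exp (-b ^ 2 / (4 * v)) :=
  calc √(1 - cdfFn ν b) ≤ √(exp (-b ^ 2 / (2 * v))) :=
        sqrt_le_sqrt ((one_sub_cdfFn b).trans_le (htail b hb))
    _ = exp (-b ^ 2 / (4 * v)) := by rw [← exp_half]; ring_nf

end GaussianTail

/-- Gaussian tail-quantile integral bound: with `B_n = √(2σ² log n)` and `η = F(B_n)`,
`∫_η^1 V_β dβ ≤ 2√(2σ²/e)·√(1−η) ≤ 2√(2σ²/e)·exp(−B_n²/(4σ²)) = 2√(2σ²/e)/√n ≤ 2σ/√n`. -/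
theorem stmt_14
    (σ : ℝ) (hσ : 0 < σ) (n : ℕ) (hn : 1 ≤ n)
    (ν : MeasureTheory.Measure ℝ)
    (hν : ν = ProbabilityTheory.gaussianReal 0 ⟨σ ^ 2, sq_nonneg σ⟩)
    (Bn η : ℝ) (hBn : Bn = Real.sqrt (2 * σ ^ 2 * Real.log n)) (hη : η = cdfFn ν Bn) :
    (∫ β in η..1, VaR ν β)
        ≤ 2 * Real.sqrt (2 * σ ^ 2 / Real.exp 1) * Real.sqrt (1 - η) ∧
      2 * Real.sqrt (2 * σ ^ 2 / Real.exp 1) * Real.sqrt (1 - η)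
        ≤ 2 * Real.sqrt (2 * σ ^ 2 / Real.exp 1) * Real.exp (-(Bn ^ 2) / (4 * σ ^ 2)) ∧
      2 * Real.sqrt (2 * σ ^ 2 / Real.exp 1) * Real.exp (-(Bn ^ 2) / (4 * σ ^ 2))
        = 2 * Real.sqrt (2 * σ ^ 2 / Real.exp 1) / Real.sqrt n ∧
      2 * Real.sqrt (2 * σ ^ 2 / Real.exp 1) / Real.sqrt n ≤ 2 * σ / Real.sqrt n := by
  subst hη
  have : IsProbabilityMeasure ν := hν ▸ instIsProbabilityMeasureGaussianReal _ _
  have hσ2 : 0 < σ ^ 2 := by positivity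
  have htail : ∀ x, 0 ≤ x → ν.real (Ioi x) ≤ exp (-x ^ 2 / (2 * σ ^ 2)) :=
    hν ▸ fun x hx => gaussianReal_real_Ioi_le _ hx
  have hBn0 : 0 ≤ Bn := hBn ▸ sqrt_nonneg _
  have hBn2 : Bn ^ 2 = 2 * σ ^ 2 * log n := by
    rw [hBn, sq_sqrt (by have := log_natCast_nonneg n; positivity)]
  refine ⟨integral_VaR_le_of_tail_le hσ2 htail hBn0, ?_, ?_, ?_⟩
  · gcongr
    exact sqrt_one_sub_cdfFn_le_of_tail_le htail hBn0
  · have hn_pos : (0 : ℝ) < n := by exact_mod_cast hn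
    rw [hBn2, show -(2 * σ ^ 2 * log n) / (4 * σ ^ 2) = -(log n / 2) by field_simp; ring,
      exp_neg, exp_half, exp_log hn_pos, ← div_eq_mul_inv]
  · gcongr
    calc √(2 * σ ^ 2 / exp 1) ≤ √(σ ^ 2) := by
          refine sqrt_le_sqrt ((div_le_iff₀ (exp_pos 1)).mpr ?_)
          nlinarith [add_one_le_exp 1]
      _ = σ := sqrt_sq hσ.le
end
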